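/- Let T be a spherically homogeneous rooted tree and let ρ : G → Aut T be a weakly branch action. Then: (1) for every g ∈ G and every vertex v, rist_ρ(v^{ρ(g)}) = g⁻¹·rist_ρ(v)·g; and (2) for any two distinct vertices v ≠ w of T, it is not the case that both rist_ρ(v) ∩ rist_ρ(w) ≠ 1 and N_G(rist_ρ(v)) = N_G(rist_ρ(w)). Consequently, the assignment v ↦ [rist_ρ(v)] is an injective G-equivariant map from T into the structure graph of G. -/

import Mathlib

open Equiv

/-- Vertices of the spherically homogeneous rooted tree of type `m`: finite sequences
`(v_0, …, v_{n−1})` with `v_i ∈ Fin (m i)`. -/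
def Vertex (m : ℕ → ℕ) : Type := (n : ℕ) × (∀ i : Fin n, Fin (m i))

/-- `u` is a prefix of `v` (i.e. `u` is an ancestor of `v`, or `u = v`). -/
def IsPrefixV {m : ℕ → ℕ} (u v : Vertex m) : Prop :=
  u.1 ≤ v.1 ∧ ∀ (i : ℕ) (hu : i < u.1) (hv : i < v.1), (u.2 ⟨i, hu⟩ : ℕ) = (v.2 ⟨i, hv⟩ : ℕ)

/-- The automorphism group `Aut T` of the tree: the permutations of the vertex set which
preserve the length (level) and the prefix relation. -/
def treeAut (m : ℕ → ℕ) : Subgroup (Perm (Vertex m)) where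
  carrier := {f | (∀ v, (f v).1 = v.1) ∧ ∀ u v, IsPrefixV u v ↔ IsPrefixV (f u) (f v)}
  one_mem' := ⟨fun _ => rfl, fun _ _ => by simp⟩
  mul_mem' := by
    rintro f g ⟨hf1, hf2⟩ ⟨hg1, hg2⟩
    refine ⟨fun v => ?_, fun u v => ?_⟩
    · rw [Perm.mul_apply, hf1, hg1]
    · rw [Perm.mul_apply, Perm.mul_apply, ← hf2, ← hg2]
  inv_mem' := by
    rintro f ⟨hf1, hf2⟩
    refine ⟨fun v => ?_, fun u v => ?_⟩
    · have h := hf1 (f⁻¹ v)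
      rw [Perm.coe_inv, Equiv.apply_symm_apply] at h
      exact h.symm
    · have h := hf2 (f⁻¹ u) (f⁻¹ v)
      simp only [Perm.coe_inv, Equiv.apply_symm_apply] at h
      exact h.symm

variable {m : ℕ → ℕ}

/-- The stabilizer `st_G(v)` of a vertex `v` in `G`. -/
def st (G : Subgroup (Perm (Vertex m))) (v : Vertex m) : Subgroup (Perm (Vertex m)) :=
  G ⊓ MulAction.stabilizer (Perm (Vertex m)) v

/-- The rigid vertex stabilizer `rist_G(v)`: elements of `G` fixing every vertex that does not
have `v` as a prefix. -/
def rist (G : Subgroup (Perm (Vertex m))) (v : Vertex m) : Subgroup (Perm (Vertex m)) :=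
  G ⊓ fixingSubgroup (Perm (Vertex m)) {u | ¬ IsPrefixV v u}

/-- The level stabilizer `St_G(n)`: the pointwise stabilizer in `G` of all vertices of length
`n`. -/
def StL (G : Subgroup (Perm (Vertex m))) (n : ℕ) : Subgroup (Perm (Vertex m)) :=
  G ⊓ fixingSubgroup (Perm (Vertex m)) {u : Vertex m | u.1 = n}

/-- `G` acts transitively on every level of the tree. -/
def LevelTransitive (G : Subgroup (Perm (Vertex m))) : Prop :=
  ∀ u v : Vertex m, u.1 = v.1 → ∃ g ∈ G, g u = v

/-- `G` is weakly branch: level-transitive with all rigid vertex stabilizers infinite. -/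
def IsWeaklyBranch (G : Subgroup (Perm (Vertex m))) : Prop :=
  LevelTransitive G ∧ ∀ v : Vertex m, Infinite (rist G v)

/-- The conjugate subgroup `g B g⁻¹`. -/
def conjS {Γ : Type*} [Group Γ] (g : Γ) (B : Subgroup Γ) : Subgroup Γ :=
  Subgroup.map (MulAut.conj g).toMonoidHom B

/-- A weakly branch action of a group `G` on the tree of type `m`: an injective homomorphism
into `Aut T` whose image is weakly branch. -/
def IsWBAction {G : Type*} [Group G] (m : ℕ → ℕ) (ρ : G →* Perm (Vertex m)) : Prop :=
  Function.Injective ρ ∧ ρ.range ≤ treeAut m ∧ IsWeaklyBranch ρ.range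

/-- `G` is `T`-rigid: it admits a weakly branch action on `T` and the images of any two weakly
branch actions are conjugate in `Aut T`. -/
def TRigid (G : Type*) [Group G] (m : ℕ → ℕ) : Prop :=
  (∃ ρ : G →* Perm (Vertex m), IsWBAction m ρ) ∧
  ∀ ρ τ : G →* Perm (Vertex m), IsWBAction m ρ → IsWBAction m τ →
    ∃ f ∈ treeAut m, τ.range = conjS f ρ.range

/-- `st_ρ(v) = ρ⁻¹(st_{ρ(G)}(v))`. -/
def stA {G : Type*} [Group G] (ρ : G →* Perm (Vertex m)) (v : Vertex m) : Subgroup G :=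
  Subgroup.comap ρ (st ρ.range v)

/-- `rist_ρ(v) = ρ⁻¹(rist_{ρ(G)}(v))`. -/
def ristA {G : Type*} [Group G] (ρ : G →* Perm (Vertex m)) (v : Vertex m) : Subgroup G :=
  Subgroup.comap ρ (rist ρ.range v)


section AuxLemmas

lemma vertex_ext {u v : Vertex m} (h1 : u.1 = v.1)
    (h2 : ∀ (i : ℕ) (hu : i < u.1) (hv : i < v.1), (u.2 ⟨i, hu⟩ : ℕ) = (v.2 ⟨i, hv⟩ : ℕ)) :
    u = v := by
  obtain ⟨n, f⟩ := u
  obtain ⟨n', f'⟩ := v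
  dsimp at h1
  subst h1
  exact congrArg (Sigma.mk n) (funext fun i => Fin.ext (h2 i i.2 i.2))

lemma prefix_refl (v : Vertex m) : IsPrefixV v v :=
  ⟨le_refl _, fun _ _ _ => rfl⟩

lemma eq_of_prefix_of_level_eq {u v : Vertex m} (h : IsPrefixV u v)
    (h1 : u.1 = v.1) : u = v :=
  vertex_ext h1 h.2

lemma prefix_trans' {a b u : Vertex m} (ha : IsPrefixV a u) (hb : IsPrefixV b u)
    (hab : a.1 ≤ b.1) : IsPrefixV a b :=
  ⟨hab, fun i hi hib => (ha.2 i hi (lt_of_lt_of_le hib hb.1)).trans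
    (hb.2 i hib (lt_of_lt_of_le hib hb.1)).symm⟩

lemma eq_of_prefix_prefix {a b u : Vertex m} (ha : IsPrefixV a u)
    (hb : IsPrefixV b u) (h : a.1 = b.1) : a = b :=
  eq_of_prefix_of_level_eq (prefix_trans' ha hb h.le) h

variable {G : Type*} [Group G]

lemma mem_ristA_iff (ρ : G →* Perm (Vertex m)) (v : Vertex m) (a : G) :
    a ∈ ristA ρ v ↔ ∀ u : Vertex m, ¬ IsPrefixV v u → ρ a u = u := by
  unfold ristA rist
  rw [Subgroup.mem_comap, Subgroup.mem_inf, mem_fixingSubgroup_iff]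
  simp only [MonoidHom.mem_range, Set.mem_setOf_eq, Perm.smul_def]
  exact ⟨fun h => h.2, fun h => ⟨⟨a, rfl⟩, h⟩⟩

lemma conjS_mem {Γ : Type*} [Group Γ] (g x : Γ) (B : Subgroup Γ) :
    x ∈ conjS g B ↔ g⁻¹ * x * g ∈ B := by
  unfold conjS
  rw [Subgroup.mem_map_equiv]
  simp [MulAut.conj_symm_apply]

lemma ristA_smul {ρ : G →* Perm (Vertex m)} (hρ : IsWBAction m ρ) (g : G) (v : Vertex m) :
    ristA ρ (ρ g v) = conjS g (ristA ρ v) := by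
  have hg : ρ g ∈ treeAut m := hρ.2.1 ⟨g, rfl⟩
  ext x
  rw [conjS_mem, mem_ristA_iff, mem_ristA_iff]
  constructor
  · intro h u hu
    have h2 : ¬ IsPrefixV (ρ g v) (ρ g u) := fun c => hu ((hg.2 v u).mpr c)
    have h3 := h (ρ g u) h2
    simp only [map_mul, map_inv, Perm.mul_apply]
    rw [h3, Perm.coe_inv, Equiv.symm_apply_apply]
  · intro h u hu
    set u' := (ρ g)⁻¹ u with hu'
    have hgu : ρ g u' = u := by rw [hu', Perm.coe_inv, Equiv.apply_symm_apply]
    have h2 : ¬ IsPrefixV v u' := by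
      intro c
      exact hu (by rw [← hgu]; exact (hg.2 v u').mp c)
    have h3 := h u' h2
    simp only [map_mul, map_inv, Perm.mul_apply, hgu] at h3
    have := congrArg (ρ g) h3
    rwa [Perm.coe_inv, Equiv.apply_symm_apply, hgu] at this

lemma exists_ne_one_ristA {ρ : G →* Perm (Vertex m)} (hρ : IsWBAction m ρ) (v : Vertex m) :
    ∃ a : G, a ≠ 1 ∧ a ∈ ristA ρ v := by
  haveI := hρ.2.2.2 v
  obtain ⟨x, hx1⟩ := exists_ne (1 : rist ρ.range v)
  have hxr : (x : Perm (Vertex m)) ∈ ρ.range := (Subgroup.mem_inf.mp x.2).1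
  obtain ⟨a, ha⟩ := hxr
  refine ⟨a, ?_, ?_⟩
  · intro h
    apply hx1
    ext
    rw [← ha, h, map_one]
    rfl
  · rw [ristA, Subgroup.mem_comap, ha]
    exact x.2

lemma ristA_inf_eq_bot {ρ : G →* Perm (Vertex m)} (hρ : IsWBAction m ρ) {v w : Vertex m}
    (hvw : ¬ IsPrefixV v w) (hwv : ¬ IsPrefixV w v) :
    ristA ρ v ⊓ ristA ρ w = ⊥ := by
  rw [eq_bot_iff]
  intro a ha
  rw [Subgroup.mem_inf, mem_ristA_iff, mem_ristA_iff] at ha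
  rw [Subgroup.mem_bot]
  apply hρ.1
  rw [map_one]
  ext u
  rcases le_total v.1 w.1 with hle | hle
  · by_cases h : IsPrefixV v u
    · refine ha.2 u fun c => ?_
      by_cases h2 : w.1 ≤ u.1
      · exact hvw (prefix_trans' h c hle)
      · exact h2 c.1
    · exact ha.1 u h
  · by_cases h : IsPrefixV w u
    · refine ha.1 u fun c => ?_
      exact hwv (prefix_trans' h c hle)
    · exact ha.2 u h

lemma conjS_eq_of_mem_normalizer {Γ : Type*} [Group Γ] {g : Γ} {H : Subgroup Γ}
    (hg : g ∈ Subgroup.normalizer (H : Set Γ)) : conjS g H = H := by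
  ext x
  rw [conjS_mem]
  have h1 := Subgroup.mem_normalizer_iff.mp hg (g⁻¹ * x * g)
  rw [show g * (g⁻¹ * x * g) * g⁻¹ = x by group] at h1
  exact h1

lemma mem_normalizer_of_conjS_eq {Γ : Type*} [Group Γ] {g : Γ} {H : Subgroup Γ}
    (h : conjS g H = H) : g ∈ Subgroup.normalizer (H : Set Γ) := by
  rw [Subgroup.mem_normalizer_iff]
  intro x
  constructor
  · intro hx
    rw [← h, conjS_mem, show g⁻¹ * (g * x * g⁻¹) * g = x by group]
    exact hx
  · intro hx
    rw [← h, conjS_mem, show g⁻¹ * (g * x * g⁻¹) * g = x by group] at hx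
    exact hx

lemma fixes_of_mem_normalizer {ρ : G →* Perm (Vertex m)} (hρ : IsWBAction m ρ) {g : G}
    {w : Vertex m} (hg : g ∈ Subgroup.normalizer (ristA ρ w : Set G)) : ρ g w = w := by
  have hc : ristA ρ (ρ g w) = ristA ρ w := by
    rw [ristA_smul hρ, conjS_eq_of_mem_normalizer hg]
  by_contra hne
  have hlvl : (ρ g w).1 = w.1 := (hρ.2.1 ⟨g, rfl⟩).1 w
  have h1 : ¬ IsPrefixV (ρ g w) w := fun c => hne (eq_of_prefix_of_level_eq c hlvl)
  have h2 : ¬ IsPrefixV w (ρ g w) := fun c => hne (eq_of_prefix_of_level_eq c hlvl.symm).symm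
  have hbot := ristA_inf_eq_bot hρ h1 h2
  rw [hc, inf_idem] at hbot
  obtain ⟨a, ha1, ha2⟩ := exists_ne_one_ristA hρ w
  rw [hbot, Subgroup.mem_bot] at ha2
  exact ha1 ha2

lemma mem_normalizer_of_fixes {ρ : G →* Perm (Vertex m)} (hρ : IsWBAction m ρ) {g : G}
    {v : Vertex m} (hg : ρ g v = v) : g ∈ Subgroup.normalizer (ristA ρ v : Set G) := by
  apply mem_normalizer_of_conjS_eq
  rw [← ristA_smul hρ, hg]

end AuxLemmas

/-- Let `ρ : G → Aut T` be a weakly branch action. Then: (1) rigid stabilizers are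
`G`-equivariant, i.e. `rist_ρ(ρ(g)·v) = g·rist_ρ(v)·g⁻¹` for every `g ∈ G` and every vertex
`v` (equivalently, `rist_ρ(v^{ρ(g)}) = g⁻¹·rist_ρ(v)·g` in right-action notation); and
(2) for distinct vertices `v ≠ w` it is not the case that both `rist_ρ(v) ∩ rist_ρ(w) ≠ 1`
and `N_G(rist_ρ(v)) = N_G(rist_ρ(w))`. Consequently `v ↦ [rist_ρ(v)]` is an injective
`G`-equivariant map from `T` into the structure graph of `G`. -/
theorem rist_equivariant_and_separating {G : Type*} [Group G] (m : ℕ → ℕ)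
    (hm : ∀ n, 2 ≤ m n) (ρ : G →* Perm (Vertex m)) (hρ : IsWBAction m ρ) :
    (∀ (g : G) (v : Vertex m), ristA ρ (ρ g v) = conjS g (ristA ρ v)) ∧
    ∀ v w : Vertex m, v ≠ w →
      ¬ (ristA ρ v ⊓ ristA ρ w ≠ ⊥ ∧ Subgroup.normalizer (ristA ρ v : Set G) = Subgroup.normalizer (ristA ρ w : Set G)) := by
  have hequiv : ∀ (g : G) (v : Vertex m), ristA ρ (ρ g v) = conjS g (ristA ρ v) :=
    fun g v => ristA_smul hρ g v
  refine ⟨hequiv, ?_⟩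
  rintro v w hvw ⟨hinter, hnorm⟩
  -- main separation argument
  have key : ∀ v w : Vertex m, IsPrefixV v w → v.1 < w.1 →
      Subgroup.normalizer (ristA ρ v : Set G) = Subgroup.normalizer (ristA ρ w : Set G) → False := by
    intro v w hpre hlt hn
    -- build a sibling w' of w differing at coordinate v.1
    have hm2 : 2 ≤ m v.1 := hm v.1
    set k : ℕ := (w.2 ⟨v.1, hlt⟩ : ℕ) with hk
    set c : Fin (m v.1) := if k = 0 then ⟨1, by omega⟩ else ⟨0, by omega⟩ with hc
    have hck : (c : ℕ) ≠ k := by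
      rcases eq_or_ne k 0 with h | h
      · rw [hc, if_pos h, h]
        simp
      · rw [hc, if_neg h]
        show (0 : ℕ) ≠ k
        omega
    set w' : Vertex m :=
      ⟨w.1, fun i => if h : (i : ℕ) = v.1 then Fin.cast (congrArg m h).symm c else w.2 i⟩
      with hw'
    have hw'coord : ∀ (i : ℕ) (hi : i < w.1), (w'.2 ⟨i, hi⟩ : ℕ) =
        if i = v.1 then (c : ℕ) else (w.2 ⟨i, hi⟩ : ℕ) := by
      intro i hi
      by_cases h : i = v.1 <;> simp [w', h]
    have hne : w' ≠ w := by
      intro he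
      have := congrArg (fun x : Vertex m => if h : v.1 < x.1 then (x.2 ⟨v.1, h⟩ : ℕ) else 0) he
      simp only [hlt, dif_pos] at this
      rw [dif_pos (show v.1 < w'.1 from hlt), hw'coord, if_pos rfl] at this
      exact hck this
    have hlvl' : w.1 = w'.1 := rfl
    have hpre' : IsPrefixV v w' := by
      refine ⟨hlt.le, fun i hi hi' => ?_⟩
      rw [hw'coord i hi', if_neg (by omega)]
      exact hpre.2 i hi (by omega)
    -- level transitivity
    obtain ⟨g, hgr, hgw⟩ := hρ.2.2.1 w w' hlvl'
    obtain ⟨h, rfl⟩ := hgr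
    have htree : ρ h ∈ treeAut m := hρ.2.1 ⟨h, rfl⟩
    have hhv : ρ h v = v := by
      have h1 : IsPrefixV (ρ h v) w' := by
        rw [← hgw]
        exact (htree.2 v w).mp hpre
      exact eq_of_prefix_prefix h1 hpre' (htree.1 v)
    have hmem : h ∈ Subgroup.normalizer (ristA ρ v : Set G) := mem_normalizer_of_fixes hρ hhv
    rw [hn] at hmem
    have := fixes_of_mem_normalizer hρ hmem
    rw [hgw] at this
    exact hne this
  by_cases h1 : IsPrefixV v w
  · have hlt : v.1 < w.1 := by
      rcases lt_or_eq_of_le h1.1 with h | h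
      · exact h
      · exact absurd (eq_of_prefix_of_level_eq h1 h) hvw
    exact key v w h1 hlt hnorm
  · by_cases h2 : IsPrefixV w v
    · have hlt : w.1 < v.1 := by
        rcases lt_or_eq_of_le h2.1 with h | h
        · exact h
        · exact absurd (eq_of_prefix_of_level_eq h2 h) (Ne.symm hvw)
      exact key w v h2 hlt hnorm.symm
    · exact hinter (ristA_inf_eq_bot hρ h1 h2)
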